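/- arXiv:2207.03399 — 4 statements merged into one kernel-verified Lean document; each statement's English description precedes it below -/
import Mathlib

section
/- The index [F^× : F^×₊] equals 2^{r₁}, where r₁ is the number of real embeddings of the number field F. -/
open scoped Classical
set_option linter.unusedSectionVars false



/-- The subgroup of totally positive elements of `Fˣ` (positive under every
real embedding `ρ : F →+* ℝ`). -/
def totPos (F : Type*) [Field F] : Subgroup Fˣ where
  carrier := {x | ∀ φ : F →+* ℝ, 0 < φ x}
  one_mem' := by intro φ; simp
  mul_mem' := by
    intro a b ha hb φ
    rw [Units.val_mul, map_mul]
    exact mul_pos (ha φ) (hb φ)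
  inv_mem' := by
    intro a ha φ
    rw [Units.val_inv_eq_inv_val, map_inv₀]
    exact inv_pos.mpr (ha φ)

section Aux
variable (F : Type*) [Field F] [NumberField F]

/-- The embeddings `F →+* ℝ`, as functions, are ℝ-linearly independent. -/
lemma li_embeddings : LinearIndependent ℝ (fun φ : F →+* ℝ => (φ : F → ℝ)) := by
  exact (linearIndependent_monoidHom F ℝ).comp RingHom.toMonoidHom
    (fun _ _ e => RingHom.ext (DFunLike.congr_fun e : _))

/-- The image of `F` spans the whole space `(F →+* ℝ) → ℝ`. -/
lemma span_top :
    Submodule.span ℝ (Set.range (fun x : F => fun φ : F →+* ℝ => φ x)) = ⊤ := by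
  by_contra h
  obtain ⟨f, hf0, hf⟩ := Submodule.exists_dual_map_eq_bot_of_lt_top (lt_top_iff_ne_top.mpr h)
    inferInstance
  set c : (F →+* ℝ) → ℝ := fun φ => f (fun j => if φ = j then 1 else 0) with hc
  have hsum : ∀ v : (F →+* ℝ) → ℝ, f v = ∑ φ, v φ • c φ := fun v =>
    LinearMap.pi_apply_eq_sum_univ f v
  have hzero : ∀ x : F, ∑ φ, c φ • (φ : F → ℝ) x = 0 := by
    intro x
    have hx : (fun φ : F →+* ℝ => φ x) ∈ Submodule.span ℝ
        (Set.range (fun x : F => fun φ : F →+* ℝ => φ x)) :=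
      Submodule.subset_span ⟨x, rfl⟩
    have := Submodule.mem_map_of_mem (f := f) hx
    rw [hf, Submodule.mem_bot] at this
    rw [hsum] at this
    simpa [smul_eq_mul, mul_comm] using this
  have hcz : c = 0 := by
    have hli := Fintype.linearIndependent_iff.mp (li_embeddings F)
    funext φ
    refine hli c ?_ φ
    funext x
    simpa using hzero x
  apply hf0
  apply LinearMap.ext
  intro v
  rw [hsum, hcz]
  simp

lemma exists_sign_pattern (ε : (F →+* ℝ) → ℤˣ) :
    ∃ a : F, ∀ φ : F →+* ℝ, 0 < ((ε φ : ℤ) : ℝ) * φ a := by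
  set v : (F →+* ℝ) → ℝ := fun φ => ((ε φ : ℤ) : ℝ) with hv
  have hvmem : v ∈ Submodule.span ℝ (Set.range (fun x : F => fun φ : F →+* ℝ => φ x)) := by
    rw [span_top F]; trivial
  obtain ⟨c, hcv⟩ := Finsupp.mem_span_range_iff_exists_finsupp.mp hvmem
  set t := c.support with ht
  set g : (F → ℝ) → ((F →+* ℝ) → ℝ) :=
    fun d => ∑ i ∈ t, d i • (fun φ : F →+* ℝ => φ i) with hg
  have hgc : g c = v := by
    rw [← hcv, Finsupp.sum]
  have hgcont : Continuous g := by
    apply continuous_finset_sum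
    intro i _
    exact (continuous_apply i).smul continuous_const
  set U : Set ((F →+* ℝ) → ℝ) := {w | ∀ φ, 0 < ((ε φ : ℤ) : ℝ) * w φ} with hU
  have hUopen : IsOpen U := by
    have : U = ⋂ φ : F →+* ℝ, (fun w : (F →+* ℝ) → ℝ =>
        ((ε φ : ℤ) : ℝ) * w φ) ⁻¹' Set.Ioi 0 := by
      ext w; simp [hU]
    rw [this]
    exact isOpen_iInter_of_finite fun φ =>
      isOpen_Ioi.preimage (continuous_const.mul (continuous_apply φ))
  have hvU : v ∈ U := by
    intro φ
    rcases Int.units_eq_one_or (ε φ) with h | h <;> simp [hv, h]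
  have hopen : IsOpen (g ⁻¹' U) := hUopen.preimage hgcont
  have hmem : (c : F → ℝ) ∈ g ⁻¹' U := by
    simp only [Set.mem_preimage, hgc]; exact hvU
  have hdense : Dense (Set.pi Set.univ (fun _ : F => Set.range ((↑) : ℚ → ℝ))) :=
    dense_pi Set.univ (fun _ _ => Rat.denseRange_cast)
  obtain ⟨d, hd1, hd2⟩ := hdense.exists_mem_open hopen ⟨c, hmem⟩
  choose q hq using fun i => hd1 i (Set.mem_univ i)
  refine ⟨∑ i ∈ t, (q i : F) * i, ?_⟩
  intro φ
  have hphi : φ (∑ i ∈ t, (q i : F) * i) = g d φ := by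
    rw [map_sum]
    simp only [hg, Finset.sum_apply, Pi.smul_apply, smul_eq_mul]
    refine Finset.sum_congr rfl fun i _ => ?_
    rw [map_mul, map_ratCast, hq]
  rw [hphi]
  exact hd2 φ

/-- The sign map. -/
noncomputable def signMap : Fˣ →* ((F →+* ℝ) → ℤˣ) where
  toFun x := fun φ => if 0 < φ (x : F) then 1 else -1
  map_one' := by funext φ; simp
  map_mul' a b := by
    funext φ
    have ha : φ (a : F) ≠ 0 := (map_ne_zero φ).mpr (Units.ne_zero a)
    have hb : φ (b : F) ≠ 0 := (map_ne_zero φ).mpr (Units.ne_zero b)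
    show (if 0 < φ (↑(a * b) : F) then (1 : ℤˣ) else -1)
      = (if 0 < φ (a : F) then 1 else -1) * (if 0 < φ (b : F) then 1 else -1)
    rw [Units.val_mul, map_mul]
    rcases lt_or_gt_of_ne ha with h1 | h1 <;> rcases lt_or_gt_of_ne hb with h2 | h2
    · rw [if_pos (mul_pos_of_neg_of_neg h1 h2), if_neg (asymm h1), if_neg (asymm h2)]; decide
    · rw [if_neg (asymm (mul_neg_of_neg_of_pos h1 h2)), if_neg (asymm h1), if_pos h2]; decide
    · rw [if_neg (asymm (mul_neg_of_pos_of_neg h1 h2)), if_pos h1, if_neg (asymm h2)]; decide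
    · rw [if_pos (mul_pos h1 h2), if_pos h1, if_pos h2]; decide

lemma ker_signMap : (signMap F).ker = totPos F := by
  ext x
  simp only [MonoidHom.mem_ker, funext_iff, Pi.one_apply, signMap, MonoidHom.coe_mk, OneHom.coe_mk]
  constructor
  · intro h φ
    by_contra hneg
    have hx := h φ
    rw [if_neg hneg] at hx
    exact absurd hx (by decide : ¬ (-1 : ℤˣ) = 1)
  · intro h φ
    rw [if_pos (h φ)]

lemma surj_signMap : Function.Surjective (signMap F) := by
  intro ε
  cases isEmpty_or_nonempty (F →+* ℝ) with
  | inl h => exact ⟨1, funext fun φ => h.elim φ⟩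
  | inr h =>
    obtain ⟨a, ha⟩ := exists_sign_pattern F ε
    have ha0 : a ≠ 0 := by
      obtain ⟨φ⟩ := h
      intro h0
      have hx := ha φ
      rw [h0, map_zero, mul_zero] at hx
      exact lt_irrefl 0 hx
    refine ⟨Units.mk0 a ha0, funext fun φ => ?_⟩
    have h1 := ha φ
    show (if 0 < φ ((Units.mk0 a ha0 : Fˣ) : F) then (1:ℤˣ) else -1) = ε φ
    rw [Units.val_mk0]
    rcases Int.units_eq_one_or (ε φ) with he | he
    · rw [he] at h1 ⊢
      simp only [Units.val_one, Int.cast_one, one_mul] at h1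
      rw [if_pos h1]
    · rw [he] at h1 ⊢
      have hlt : φ a < 0 := by
        simp only [Units.val_neg, Units.val_one, Int.cast_neg, Int.cast_one, neg_mul,
          one_mul] at h1
        linarith
      rw [if_neg (asymm hlt)]

end Aux

/-- The index `[F^× : F^×₊]` equals `2 ^ r₁`, where `r₁` is the number of real
embeddings of the number field `F`. -/

theorem index_totPos (F : Type*) [Field F] [NumberField F] :
    (totPos F).index = 2 ^ (Nat.card (F →+* ℝ)) := by
  rw [← ker_signMap F, Subgroup.index_ker,
    MonoidHom.range_eq_top.mpr (surj_signMap F)]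
  rw [Subgroup.card_top, Nat.card_fun]
  congr 1
  rw [Nat.card_eq_fintype_card, Fintype.card_units_int]
end

section
/- Purity lemma: Let F be a number field with embeddings Σ_F = Hom(F,ℂ), and suppose integers (n_τ)_{τ∈Σ_F} satisfy ∏_{τ∈Σ_F} τ(u)^{n_τ} = 1 for all units u in a finite-index subgroup U of the unit group U_F. Then there exists an integer w such that: (i) if F has a real embedding, then n_τ = w for all τ; (ii) if F is totally imaginary, then n_{γ∘τ} + n_{γ∘τ̄} = w for all τ ∈ Σ_F and all γ ∈ Gal(ℚ̄/ℚ). -/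
/-!
Taking logarithms of absolute values (after raising `u` to the index of `U`) turns the hypothesis
into the linear relation `∑_w c_w log w(u) = 0` for every unit `u`, where `c_w` is the sum of the
exponents of the embeddings above the place `w`. By Dirichlet's unit theorem the logarithmic
embedding of the units spans the hyperplane cut out by the product formula
`∑_w mult_w log w(u) = 0`, so `c_w` is proportional to `mult_w`, and comparing total sums gives
`[F : ℚ] c_w = (∑_τ n_τ) mult_w`. At a real place this pins down `n_τ`, at a complex place
`n_τ + n_τ̄`. The hypothesis is invariant under letting an automorphism `γ` of `ℚ̄` act on the
exponents, and `γ` can move any embedding to any other, which gives (i) from a real place and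
(ii) for every `γ`.
-/

open NumberField

namespace PurityLemma

open NumberField.InfinitePlace NumberField.Units NumberField.Units.dirichletUnitTheorem

open scoped Classical

variable {F : Type*} [Field F] [NumberField F]

theorem sum_mul_log_norm_eq_zero_of_prod_zpow_eq_one {n : (F →+* ℂ) → ℤ} {x : F} (hx : x ≠ 0)
    (h : ∏ τ : F →+* ℂ, τ x ^ n τ = 1) :
    ∑ τ : F →+* ℂ, (n τ : ℝ) * Real.log ‖τ x‖ = 0 := by
  have hτx : ∀ τ : F →+* ℂ, ‖τ x‖ ^ n τ ≠ 0 := fun τ ↦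
    zpow_ne_zero _ (norm_ne_zero_iff.mpr ((map_ne_zero τ).mpr hx))
  have := congrArg (Real.log ∘ norm) h
  simp only [Function.comp_apply, norm_prod, norm_zpow, norm_one, Real.log_one] at this
  simpa only [Real.log_prod fun τ _ ↦ hτx τ, Real.log_zpow] using this

theorem sum_mul_log_norm_unit_eq_zero_of_index_ne_zero {n : (F →+* ℂ) → ℤ}
    {U : Subgroup (𝓞 F)ˣ} (hU : U.index ≠ 0)
    (h : ∀ u ∈ U, ∏ τ : F →+* ℂ, (τ (algebraMap (𝓞 F) F u)) ^ (n τ) = 1) (u : (𝓞 F)ˣ) :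
    ∑ τ : F →+* ℂ, (n τ : ℝ) * Real.log ‖τ (u : F)‖ = 0 := by
  have hpow := sum_mul_log_norm_eq_zero_of_prod_zpow_eq_one
    (pow_ne_zero U.index (coe_ne_zero u)) (by simpa using h _ (U.pow_index_mem u))
  simp only [map_pow, norm_pow, Real.log_pow, mul_left_comm _ (U.index : ℝ),
    ← Finset.mul_sum] at hpow
  exact (mul_eq_zero.mp hpow).resolve_left (Nat.cast_ne_zero.mpr hU)

noncomputable def placeSum (n : (F →+* ℂ) → ℤ) (w : InfinitePlace F) : ℤ :=
  ∑ φ ∈ {φ | mk φ = w}, n φ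

theorem filter_mk_eq_mk_eq_pair (φ : F →+* ℂ) :
    ({ψ | mk ψ = mk φ} : Finset (F →+* ℂ)) = {φ, ComplexEmbedding.conjugate φ} := by
  ext ψ
  simp only [Finset.mem_filter, Finset.mem_univ, true_and, Finset.mem_insert,
    Finset.mem_singleton, mk_eq_iff]
  rw [ComplexEmbedding.conjugate, ComplexEmbedding.conjugate, star_eq_iff_star_eq,
    eq_comm (a := star φ)]

theorem placeSum_mk (n : (F →+* ℂ) → ℤ) (φ : F →+* ℂ) :
    placeSum n (mk φ) = ∑ ψ ∈ {φ, ComplexEmbedding.conjugate φ}, n ψ := by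
  rw [placeSum, filter_mk_eq_mk_eq_pair]

theorem sum_placeSum (n : (F →+* ℂ) → ℤ) : ∑ w, placeSum n w = ∑ τ, n τ :=
  Finset.sum_fiberwise Finset.univ InfinitePlace.mk n

theorem sum_placeSum_mul_log (n : (F →+* ℂ) → ℤ) (x : F) :
    ∑ w : InfinitePlace F, (placeSum n w : ℝ) * Real.log (w x) =
      ∑ τ : F →+* ℂ, (n τ : ℝ) * Real.log ‖τ x‖ := by
  rw [← Finset.sum_fiberwise Finset.univ mk]
  refine Finset.sum_congr rfl fun w _ ↦ ?_
  rw [placeSum, Int.cast_sum, Finset.sum_mul]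
  refine Finset.sum_congr rfl fun φ hφ ↦ ?_
  rw [← (Finset.mem_filter.mp hφ).2, apply]

theorem eq_zero_of_forall_sum_mul_logEmbedding_eq_zero (a : logSpace F)
    (ha : ∀ u : (𝓞 F)ˣ, ∑ w, a w * logEmbedding F (Additive.ofMul u) w = 0) : a = 0 := by
  have hker :
      (unitLattice F : Set (logSpace F)) ⊆ LinearMap.ker (Fintype.linearCombination ℝ a) := by
    rintro _ ⟨u, -, rfl⟩
    simpa [Fintype.linearCombination_apply, mul_comm] using ha u.toMul
  have htop := Submodule.span_le.mpr hker
  rw [unitLattice_span_eq_top] at htop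
  ext w
  simpa using htop (Submodule.mem_top (x := Pi.single w 1))

/-- Dirichlet's unit theorem: the only linear relation among the functions `u ↦ log w(u)` on the
units is the product formula `∑_w mult_w log w(u) = 0`. -/
theorem exists_eq_mul_mult_of_sum_mul_log_eq_zero (c : InfinitePlace F → ℝ)
    (hc : ∀ u : (𝓞 F)ˣ, ∑ w, c w * Real.log (w (u : F)) = 0) :
    ∃ t : ℝ, ∀ w, c w = t * mult w := by
  set t := c w₀ / mult (w₀ : InfinitePlace F)
  have hmult : ∀ w : InfinitePlace F, (mult w : ℝ) ≠ 0 := fun w ↦ mult_coe_ne_zero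
  have hdev : (fun w : {w // w ≠ w₀} ↦ c w.1 / mult w.1 - t) = 0 := by
    refine eq_zero_of_forall_sum_mul_logEmbedding_eq_zero _ fun u ↦ ?_
    calc ∑ w : {w // w ≠ w₀}, (c w.1 / mult w.1 - t) * logEmbedding F (Additive.ofMul u) w
        = ∑ w, (c w / mult w - t) * (mult w * Real.log (w (u : F))) := by
          rw [Fintype.sum_eq_add_sum_subtype_ne _ w₀]
          simp [t]
      _ = ∑ w, c w * Real.log (w (u : F)) - t * ∑ w, mult w * Real.log (w (u : F)) := by
          rw [Finset.mul_sum, ← Finset.sum_sub_distrib]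
          refine Finset.sum_congr rfl fun w _ ↦ ?_
          field_simp [hmult w]
      _ = 0 := by rw [hc u, sum_mult_mul_log u]; ring
  refine ⟨t, fun w ↦ ?_⟩
  by_cases hw : w = w₀
  · subst hw
    exact (div_mul_cancel₀ _ (hmult _)).symm
  · have := congrFun hdev ⟨w, hw⟩
    simp only [Pi.zero_apply, sub_eq_zero] at this
    field_simp [hmult w] at this
    linarith

variable {n : (F →+* ℂ) → ℤ}

theorem finrank_mul_placeSum_eq
    (hlog : ∀ u : (𝓞 F)ˣ, ∑ τ : F →+* ℂ, (n τ : ℝ) * Real.log ‖τ (u : F)‖ = 0)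
    (w : InfinitePlace F) :
    (Module.finrank ℚ F : ℤ) * placeSum n w = (∑ τ, n τ) * mult w := by
  obtain ⟨t, ht⟩ := exists_eq_mul_mult_of_sum_mul_log_eq_zero (fun w ↦ placeSum n w)
    fun u ↦ (sum_placeSum_mul_log n u).trans (hlog u)
  have hsum : ((∑ τ, n τ : ℤ) : ℝ) = t * Module.finrank ℚ F := by
    rw [← sum_placeSum, Int.cast_sum, Finset.sum_congr rfl fun w _ ↦ ht w, ← Finset.mul_sum,
      ← sum_mult_eq, Nat.cast_sum]
  have : (Module.finrank ℚ F : ℝ) * placeSum n w = (∑ τ, n τ : ℤ) * mult w := by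
    rw [ht w, hsum]
    ring
  exact_mod_cast this

theorem finrank_mul_eq_sum_of_isReal
    (hlog : ∀ u : (𝓞 F)ˣ, ∑ τ : F →+* ℂ, (n τ : ℝ) * Real.log ‖τ (u : F)‖ = 0)
    {φ : F →+* ℂ} (hφ : ComplexEmbedding.IsReal φ) :
    (Module.finrank ℚ F : ℤ) * n φ = ∑ τ, n τ := by
  have := finrank_mul_placeSum_eq hlog (mk φ)
  rwa [placeSum_mk, ComplexEmbedding.isReal_iff.mp hφ, Finset.pair_eq_singleton,
    Finset.sum_singleton, mult, if_pos (isReal_mk_iff.mpr hφ), Nat.cast_one, mul_one] at this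

theorem finrank_mul_add_conjugate_eq_of_not_isReal
    (hlog : ∀ u : (𝓞 F)ˣ, ∑ τ : F →+* ℂ, (n τ : ℝ) * Real.log ‖τ (u : F)‖ = 0)
    {φ : F →+* ℂ} (hφ : ¬ ComplexEmbedding.IsReal φ) :
    (Module.finrank ℚ F : ℤ) * (n φ + n (ComplexEmbedding.conjugate φ)) = 2 * ∑ τ, n τ := by
  have := finrank_mul_placeSum_eq hlog (mk φ)
  rwa [placeSum_mk, Finset.sum_pair fun h ↦ hφ (ComplexEmbedding.isReal_iff.mpr h.symm), mult,
    if_neg (hφ ∘ isReal_mk_iff.mp), Nat.cast_two, mul_comm _ 2] at this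

section Twist

variable {K : Type*} [Field K] (j : K →+* ℂ) (γ : K →+* K) (r : (F →+* ℂ) → (F →+* K))

/-- Ring endomorphisms of `ℂ` need not extend isomorphisms `σ(F) ≃ τ(F)`, so to move `σ` to `τ`
the twist is by an endomorphism `γ` of a field `K ⊆ ℂ` containing every `φ(F)` (the algebraic
numbers), with `r` lifting embeddings along `j`. -/
def twistEmbedding (φ : F →+* ℂ) : F →+* ℂ := j.comp (γ.comp (r φ))

variable {j r}

theorem twistEmbedding_bijective (hr : ∀ φ, j.comp (r φ) = φ) :
    Function.Bijective (twistEmbedding j γ r) := by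
  refine Finite.injective_iff_bijective.mp fun φ ψ h ↦ ?_
  have : r φ = r ψ := RingHom.ext fun x ↦ γ.injective (j.injective (RingHom.congr_fun h x))
  rw [← hr φ, ← hr ψ, this]

theorem prod_zpow_twistEmbedding_eq_one (hr : ∀ φ, j.comp (r φ) = φ) {x : F}
    (h : ∏ τ : F →+* ℂ, τ x ^ n τ = 1) :
    ∏ τ : F →+* ℂ, τ x ^ n (twistEmbedding j γ r τ) = 1 := by
  have hγ : j (γ (∏ τ, r τ x ^ n (twistEmbedding j γ r τ))) = 1 := by
    simp only [map_prod, map_zpow₀]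
    exact ((twistEmbedding_bijective γ hr).prod_comp fun σ ↦ σ x ^ n σ).trans h
  rw [← map_one j, j.injective.eq_iff, ← map_one γ, γ.injective.eq_iff] at hγ
  calc ∏ τ, τ x ^ n (twistEmbedding j γ r τ)
      = j (∏ τ, r τ x ^ n (twistEmbedding j γ r τ)) := by
        rw [map_prod]
        exact Finset.prod_congr rfl fun τ _ ↦ by rw [map_zpow₀, ← RingHom.comp_apply, hr]
    _ = 1 := by rw [hγ, map_one]

theorem sum_twistEmbedding (hr : ∀ φ, j.comp (r φ) = φ) (n : (F →+* ℂ) → ℤ) :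
    ∑ τ, n (twistEmbedding j γ r τ) = ∑ τ, n τ :=
  (twistEmbedding_bijective γ hr).sum_comp n

theorem sum_mul_log_norm_twistEmbedding_eq_zero (hr : ∀ φ, j.comp (r φ) = φ)
    {U : Subgroup (𝓞 F)ˣ} (hU : U.index ≠ 0)
    (h : ∀ u ∈ U, ∏ τ : F →+* ℂ, (τ (algebraMap (𝓞 F) F u)) ^ (n τ) = 1) (u : (𝓞 F)ˣ) :
    ∑ τ : F →+* ℂ, (n (twistEmbedding j γ r τ) : ℝ) * Real.log ‖τ (u : F)‖ = 0 :=
  sum_mul_log_norm_unit_eq_zero_of_index_ne_zero hU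
    (fun u hu ↦ prod_zpow_twistEmbedding_eq_one γ hr (h u hu)) u

end Twist

theorem exists_ringHom_comp_eq {E K : Type*} [Field E] [Algebra ℚ E] [Field K] [Algebra ℚ K]
    [IsAlgClosed K] [Algebra.IsAlgebraic ℚ K] (σ τ : E →+* K) :
    ∃ γ : K →+* K, γ.comp σ = τ := by
  let _ : Algebra E K := σ.toAlgebra
  have : IsScalarTower ℚ E K := .of_algebraMap_eq' (Subsingleton.elim _ _)
  have : Algebra.IsAlgebraic E K := Algebra.IsAlgebraic.tower_top (K := ℚ) E
  obtain ⟨γ, hγ⟩ := IsAlgClosed.surjective_domRestrict_of_isAlgebraic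
    (K := ℚ) (L := E) (E := K) (M := K) τ.toRatAlgHom
  exact ⟨γ.toRingHom, RingHom.ext fun y ↦ AlgHom.congr_fun hγ y⟩

theorem apply_mem_algebraicClosure (φ : F →+* ℂ) (x : F) : φ x ∈ algebraicClosure ℚ ℂ :=
  mem_algebraicClosure_iff.mpr ((Algebra.IsAlgebraic.isAlgebraic x).algHom φ.toRatAlgHom)

noncomputable def toAlgebraicClosure (φ : F →+* ℂ) : F →+* algebraicClosure ℚ ℂ :=
  φ.codRestrict _ (apply_mem_algebraicClosure φ)

theorem val_comp_toAlgebraicClosure (φ : F →+* ℂ) :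
    (algebraicClosure ℚ ℂ).val.toRingHom.comp (toAlgebraicClosure φ) = φ :=
  rfl

theorem exists_twistEmbedding_eq (σ τ : F →+* ℂ) :
    ∃ γ, twistEmbedding (algebraicClosure ℚ ℂ).val.toRingHom γ toAlgebraicClosure σ = τ := by
  have := (algebraicClosure.isAlgClosure ℚ ℂ).isAlgClosed
  have : Algebra.IsAlgebraic ℚ (algebraicClosure ℚ ℂ) := algebraicClosure.isAlgebraic ℚ ℂ
  obtain ⟨γ, hγ⟩ := exists_ringHom_comp_eq (toAlgebraicClosure σ) (toAlgebraicClosure τ)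
  exact ⟨γ, by rw [twistEmbedding, hγ, val_comp_toAlgebraicClosure]⟩

omit [NumberField F] in
theorem isReal_ofRealHom_comp (ρ : F →+* ℝ) :
    ComplexEmbedding.IsReal (Complex.ofRealHom.comp ρ) :=
  ComplexEmbedding.isReal_iff.mpr <| RingHom.ext fun x ↦ Complex.conj_ofReal (ρ x)

end PurityLemma

open PurityLemma in
/-- Purity lemma: if integers `(n_τ)_{τ : F →+* ℂ}` satisfy
`∏_τ τ(u)^{n_τ} = 1` for all `u` in a finite-index subgroup `U` of the unit
group of `𝓞 F`, then there is `w ∈ ℤ` such that (i) if `F` has a real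
embedding then `n_τ = w` for all `τ`, and (ii) if `F` has no real embedding
then `n_{γ∘τ} + n_{γ∘τ̄} = w` for all `τ` and all `γ ∈ Gal(ℚ̄/ℚ)`. -/
theorem purity_lemma (F : Type*) [Field F] [NumberField F]
    (n : (F →+* ℂ) → ℤ) (U : Subgroup (𝓞 F)ˣ) (hU : U.index ≠ 0)
    (h : ∀ u ∈ U, ∏ τ : F →+* ℂ, (τ (algebraMap (𝓞 F) F u)) ^ (n τ) = 1) :
    ∃ w : ℤ,
      (Nonempty (F →+* ℝ) → ∀ τ : F →+* ℂ, n τ = w) ∧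
      (IsEmpty (F →+* ℝ) → ∀ (τ : F →+* ℂ) (γ : ℂ →+* ℂ),
        n (γ.comp τ) + n (γ.comp ((starRingEnd ℂ).comp τ)) = w) := by
  have hd : (Module.finrank ℚ F : ℤ) ≠ 0 := by exact_mod_cast Module.finrank_pos.ne'
  have hlog := sum_mul_log_norm_unit_eq_zero_of_index_ne_zero hU h
  by_cases hreal : Nonempty (F →+* ℝ)
  · obtain ⟨ρ⟩ := hreal
    set σ := Complex.ofRealHom.comp ρ
    have hσ : ComplexEmbedding.IsReal σ := isReal_ofRealHom_comp ρ
    refine ⟨n σ, fun _ τ ↦ ?_, fun h' ↦ (h'.false ρ).elim⟩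
    obtain ⟨γ, hγ⟩ := exists_twistEmbedding_eq σ τ
    have key := finrank_mul_eq_sum_of_isReal
      (sum_mul_log_norm_twistEmbedding_eq_zero γ val_comp_toAlgebraicClosure hU h) hσ
    rw [sum_twistEmbedding γ val_comp_toAlgebraicClosure, hγ] at key
    exact mul_left_cancel₀ hd (key.trans (finrank_mul_eq_sum_of_isReal hlog hσ).symm)
  · have hcx (φ : F →+* ℂ) : ¬ ComplexEmbedding.IsReal φ := fun hφ ↦ hreal ⟨hφ.embedding⟩
    obtain ⟨τ₀⟩ : Nonempty (F →+* ℂ) := inferInstance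
    refine ⟨n τ₀ + n (ComplexEmbedding.conjugate τ₀), fun h' ↦ (hreal h').elim, fun _ τ γ ↦ ?_⟩
    have hr (φ : F →+* ℂ) : (RingHom.id ℂ).comp φ = φ := RingHom.id_comp φ
    have key := finrank_mul_add_conjugate_eq_of_not_isReal
      (sum_mul_log_norm_twistEmbedding_eq_zero γ hr hU h) (hcx τ)
    rw [sum_twistEmbedding γ hr] at key
    exact mul_left_cancel₀ hd
      (key.trans (finrank_mul_add_conjugate_eq_of_not_isReal hlog (hcx τ₀)).symm)
end

section
/- Let F be a totally imaginary number field and (n_τ)_{τ∈Σ_F} integers satisfying n_{γ∘τ} + n_{γ∘τ̄} = w for all τ ∈ Σ_F and all γ ∈ Gal(ℚ̄/ℚ). Let N be the normal subgroup of G = Gal(ℚ̄/ℚ) generated by all commutators γcγ^{-1}c (c = complex conjugation). Then n_{hτ} = n_τ for all h ∈ N and all τ, and consequently n_τ depends only on the restriction of τ to the maximal CM or totally real subfield F₁ of F. -/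
/-- Complex conjugation as a ring automorphism of `ℂ`. -/
noncomputable def conjAut : RingAut ℂ := Complex.conjAe.toRingEquiv

/-- Let `F` be a totally imaginary number field and `(n_τ)` integers satisfying
the purity condition `n_{γ∘τ} + n_{γ∘τ̄} = w` for all `τ` and all
`γ ∈ Gal(ℚ̄/ℚ)` (realized as automorphisms of `ℂ`).  Let `N` be the normal
subgroup generated by the commutators `γ·c·γ⁻¹·c`.  Then `n_{h∘τ} = n_τ` for
all `h ∈ N`; consequently `n_τ` depends only on the `N`-orbit of `τ` (that is,
on the restriction of `τ` to the maximal CM or totally real subfield `F₁`). -/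
theorem purity_invariant_under_N
    (F : Type*) [Field F] [NumberField F]
    (hF : ∀ τ : F →+* ℂ, (starRingEnd ℂ).comp τ ≠ τ)
    (n : (F →+* ℂ) → ℤ) (w : ℤ)
    (hpure : ∀ (τ : F →+* ℂ) (γ : RingAut ℂ),
      n ((γ : ℂ →+* ℂ).comp τ) +
        n ((γ : ℂ →+* ℂ).comp ((starRingEnd ℂ).comp τ)) = w) :
    (∀ h ∈ Subgroup.normalClosure
        {g : RingAut ℂ | ∃ γ : RingAut ℂ, g = γ * conjAut * γ⁻¹ * conjAut},
      ∀ τ : F →+* ℂ, n (((h : RingAut ℂ) : ℂ →+* ℂ).comp τ) = n τ) ∧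
    (∀ τ τ' : F →+* ℂ,
      (∃ h ∈ Subgroup.normalClosure
          {g : RingAut ℂ | ∃ γ : RingAut ℂ, g = γ * conjAut * γ⁻¹ * conjAut},
        ((h : RingAut ℂ) : ℂ →+* ℂ).comp τ = τ') → n τ = n τ') := by
  -- Purity rewritten: applying conjugation before `g` flips the value to `w - ·`.
  have hA : ∀ (g : RingAut ℂ) (τ : F →+* ℂ),
      n ((g : ℂ →+* ℂ).comp ((starRingEnd ℂ).comp τ)) = w - n ((g : ℂ →+* ℂ).comp τ) := by
    intro g τ
    have := hpure τ g
    omega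
  have hconj : ∀ z : ℂ, conjAut z = (starRingEnd ℂ) z := fun z => rfl
  -- key computation: every conjugate of a generator fixes `n`.
  have key : ∀ (δ γ : RingAut ℂ) (τ : F →+* ℂ),
      n (((δ * (γ * conjAut * γ⁻¹ * conjAut) * δ⁻¹ : RingAut ℂ) : ℂ →+* ℂ).comp τ) = n τ := by
    intro δ γ τ
    have e1 : (((δ * (γ * conjAut * γ⁻¹ * conjAut) * δ⁻¹ : RingAut ℂ) : ℂ →+* ℂ)).comp τ
        = ((δ * γ : RingAut ℂ) : ℂ →+* ℂ).comp
            ((starRingEnd ℂ).comp (((γ⁻¹ * conjAut * δ⁻¹ : RingAut ℂ) : ℂ →+* ℂ).comp τ)) := by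
      ext x
      rfl
    have e2 : ((δ * γ : RingAut ℂ) : ℂ →+* ℂ).comp
          (((γ⁻¹ * conjAut * δ⁻¹ : RingAut ℂ) : ℂ →+* ℂ).comp τ)
        = (δ : ℂ →+* ℂ).comp ((starRingEnd ℂ).comp (((δ⁻¹ : RingAut ℂ) : ℂ →+* ℂ).comp τ)) := by
      ext x
      show δ (γ (γ.symm (conjAut (δ.symm (τ x))))) = δ ((starRingEnd ℂ) (δ.symm (τ x)))
      rw [RingEquiv.apply_symm_apply]
      rfl
    have e3 : (δ : ℂ →+* ℂ).comp (((δ⁻¹ : RingAut ℂ) : ℂ →+* ℂ).comp τ) = τ := by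
      ext x
      exact RingEquiv.apply_symm_apply δ (τ x)
    rw [e1, hA, e2, hA, e3]
    ring
  -- the stabilizer subgroup
  set S : Set (RingAut ℂ) :=
    {g : RingAut ℂ | ∃ γ : RingAut ℂ, g = γ * conjAut * γ⁻¹ * conjAut} with hS
  have hle : Subgroup.normalClosure S ≤
      { carrier := {h : RingAut ℂ | ∀ τ : F →+* ℂ, n ((h : ℂ →+* ℂ).comp τ) = n τ}
        one_mem' := by
          intro τ
          have : (((1 : RingAut ℂ) : ℂ →+* ℂ)).comp τ = τ := by ext x; rfl
          rw [this]
        mul_mem' := by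
          intro a b ha hb τ
          have : (((a * b : RingAut ℂ) : ℂ →+* ℂ)).comp τ
              = (a : ℂ →+* ℂ).comp ((b : ℂ →+* ℂ).comp τ) := by ext x; rfl
          rw [this, ha, hb]
        inv_mem' := by
          intro a ha τ
          have h1 := ha (((a⁻¹ : RingAut ℂ) : ℂ →+* ℂ).comp τ)
          have h2 : (a : ℂ →+* ℂ).comp (((a⁻¹ : RingAut ℂ) : ℂ →+* ℂ).comp τ) = τ := by
            ext x; exact RingEquiv.apply_symm_apply a (τ x)
          rw [h2] at h1
          exact h1.symm } := by
    show Subgroup.closure (Group.conjugatesOfSet S) ≤ _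
    rw [Subgroup.closure_le]
    intro x hx
    rcases (Group.mem_conjugatesOfSet_iff).1 hx with ⟨b, hb, hcj⟩
    rcases isConj_iff.1 hcj with ⟨δ, hδ⟩
    rcases hb with ⟨γ, rfl⟩
    intro τ
    rw [← hδ]
    exact key δ γ τ
  refine ⟨fun h hmem τ => hle hmem τ, ?_⟩
  rintro τ τ' ⟨h, hmem, hEq⟩
  rw [← hEq]
  exact (hle hmem τ).symm
end

section
/- Let F be a totally imaginary field containing a maximal CM subfield F₁ with maximal totally real subfield F₀, F₁ = F₀(√D) with D ∈ F₀ totally negative. Then, as elements of ℂ^×/ℚ^×, |δ_{F/ℚ}|^{1/2} = i^{d_F/2} · Δ_F · (N_{F₁/ℚ}(δ_{F/F₁}))^{1/2}, where Δ_F = (√(N_{F₀/ℚ}(D)))^{[F:F₁]} and N_{F₁/ℚ}(δ_{F/F₁}) > 0. -/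
/-!
Take a `ℚ`-basis of `F₀`, the basis `1, d₁` of `F₁/F₀` (discriminant `4D`) and the given
`F₁`-basis of `F`. The tower formula `disc(c ⊗ b) = disc(c) ^ [L:K] · N_{K/ℚ}(disc b)`, obtained by
grouping the embeddings of `L` into fibres over those of `K`, shows that `δ_F` equals
`N(D) ^ [F:F₁] · N(δ_{F/F₁})` up to a nonzero rational square.
A norm is nonnegative once the element is nonnegative at every real embedding, because pairs of
conjugate complex embeddings contribute `|σ x| ^ 2`. Hence `N(δ_{F/F₁}) > 0`, `F₁` having no real
embedding, and `(-1) ^ [F₀:ℚ] · N(D) = N(-D) ≥ 0`, so that `√|N(D)| = ± i ^ [F₀:ℚ] · N(D) ^ (1/2)`;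
the power `i ^ (d_F / 2)` appears since `d_F = 2 [F₀:ℚ] [F:F₁]`.
-/

/-- A subfield `K` of `F` is CM iff it is totally imaginary and complex
conjugation commutes with all automorphisms of `ℂ` on its image. -/
def IsCMSubfield (F : Type*) [Field F] (K : Subfield F) : Prop :=
  (∀ σ : ↥K →+* ℂ, (starRingEnd ℂ).comp σ ≠ σ) ∧
  (∀ (σ : ↥K →+* ℂ) (γ : ℂ ≃+* ℂ),
    ((γ : ℂ →+* ℂ)).comp ((starRingEnd ℂ).comp σ) =
      (starRingEnd ℂ).comp (((γ : ℂ →+* ℂ)).comp σ))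

open scoped ComplexConjugate Kronecker
open Module NumberField Matrix Polynomial

theorem Complex.prod_eq_prod_norm_of_involutive {α : Type*} [Fintype α] {f : α → ℂ}
    {g : α → α} (hg : Function.Involutive g) (hf0 : ∀ a, f a ≠ 0)
    (hfg : ∀ a, f (g a) = conj (f a)) (hfix : ∀ a, g a = a → f a = ‖f a‖) :
    ∏ a, f a = ∏ a, (‖f a‖ : ℂ) := by
  have hnorm : ∀ a, (‖f a‖ : ℂ) ≠ 0 := fun a => by simpa using hf0 a
  have hphase : ∏ a, f a / ‖f a‖ = 1 := by
    refine Finset.prod_ninvolution g (fun a => ?_) (fun a hne hfixed => hne ?_)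
      (fun _ => Finset.mem_univ _) hg
    · rw [hfg, norm_conj, div_mul_div_comm, Complex.mul_conj', ← sq,
        div_self (pow_ne_zero 2 (hnorm a))]
    · rw [← hfix a hfixed, div_self (hf0 a)]
  calc ∏ a, f a = ∏ a, (‖f a‖ : ℂ) * (f a / ‖f a‖) :=
        Finset.prod_congr rfl fun a _ => (mul_div_cancel₀ _ (hnorm a)).symm
    _ = ∏ a, (‖f a‖ : ℂ) := by rw [Finset.prod_mul_distrib, hphase, mul_one]

theorem NumberField.norm_nonneg_of_forall_realEmbedding_nonneg {K : Type*} [Field K]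
    [NumberField K] {x : K} (hx : ∀ σ : K →+* ℝ, 0 ≤ σ x) : 0 ≤ Algebra.norm ℚ x := by
  rcases eq_or_ne x 0 with rfl | hx0
  · simp
  have hprod : ((Algebra.norm ℚ x : ℚ) : ℂ) = ∏ φ : K →+* ℂ, φ x := by
    rw [← eq_ratCast (algebraMap ℚ ℂ), Algebra.norm_eq_prod_embeddings ℚ ℂ x]
    exact (Fintype.prod_equiv (RingHom.equivRatAlgHom K ℂ) _ _ fun _ => rfl).symm
  have hreal : ∀ φ : K →+* ℂ, ComplexEmbedding.conjugate φ = φ → φ x = ‖φ x‖ := by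
    intro φ hfix
    have hφ : ComplexEmbedding.IsReal φ := ComplexEmbedding.isReal_iff.2 hfix
    rw [← hφ.coe_embedding_apply, Complex.norm_real, Real.norm_of_nonneg (hx _)]
  rw [Complex.prod_eq_prod_norm_of_involutive (ComplexEmbedding.involutive_conjugate K)
    (fun φ : K →+* ℂ => (map_ne_zero φ).2 hx0)
    (fun φ : K →+* ℂ => ComplexEmbedding.conjugate_coe_eq φ x) hreal,
    ← Complex.ofReal_prod] at hprod
  have hprodR : (Algebra.norm ℚ x : ℝ) = ∏ φ : K →+* ℂ, ‖φ x‖ := by exact_mod_cast hprod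
  have hnonneg : (0 : ℝ) ≤ Algebra.norm ℚ x :=
    hprodR ▸ Finset.prod_nonneg fun φ _ => norm_nonneg _
  exact_mod_cast hnonneg

theorem NumberField.norm_pos_of_forall_conj_comp_ne {K : Type*} [Field K] [NumberField K]
    (hK : ∀ φ : K →+* ℂ, (starRingEnd ℂ).comp φ ≠ φ) {x : K} (hx : x ≠ 0) :
    0 < Algebra.norm ℚ x := by
  refine lt_of_le_of_ne (norm_nonneg_of_forall_realEmbedding_nonneg fun σ => ?_)
    (Algebra.norm_ne_zero_iff.2 hx).symm
  exact absurd (by ext; simp) (hK (Complex.ofRealHom.comp σ))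

theorem NumberField.neg_one_pow_finrank_mul_norm_nonneg {K : Type*} [Field K] [NumberField K]
    {x : K} (hx : ∀ σ : K →+* ℝ, σ x ≤ 0) : 0 ≤ (-1) ^ finrank ℚ K * Algebra.norm ℚ x := by
  have hneg : -x = algebraMap ℚ K (-1) * x := by simp
  have := norm_nonneg_of_forall_realEmbedding_nonneg fun σ : K →+* ℝ =>
    (map_neg σ x).symm ▸ neg_nonneg.2 (hx σ)
  rwa [hneg, map_mul, Algebra.norm_algebraMap] at this

theorem Rat.exists_sqrt_abs_eq_mul_I_pow_mul_cpow_half {N : ℚ} {n : ℕ}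
    (hN : 0 ≤ (-1) ^ n * N) :
    ∃ ε : ℚ, ε ≠ 0 ∧ ((√|(N : ℝ)| : ℝ) : ℂ) = ε * Complex.I ^ n * (N : ℂ) ^ ((1 : ℂ) / 2) := by
  have habs : |(N : ℝ)| = (-1) ^ n * N := by
    rw [← abs_of_nonneg (show (0 : ℝ) ≤ (-1) ^ n * N by exact_mod_cast hN), abs_mul, abs_pow,
      abs_neg, abs_one, one_pow, one_mul]
  have hsq : ((√|(N : ℝ)| : ℝ) : ℂ) ^ 2 = (Complex.I ^ n * (N : ℂ) ^ ((1 : ℂ) / 2)) ^ 2 := by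
    rw [← Complex.ofReal_pow, Real.sq_sqrt (abs_nonneg _), habs, mul_pow, ← pow_mul, mul_comm n,
      pow_mul, Complex.I_sq, one_div, Complex.cpow_ofNat_inv_pow]
    push_cast; ring
  rcases sq_eq_sq_iff_eq_or_eq_neg.1 hsq with h | h
  · exact ⟨1, one_ne_zero, by rw [h]; push_cast; ring⟩
  · exact ⟨-1, by norm_num, by rw [h]; push_cast; ring⟩

theorem Matrix.det_of_mul_blockDiagonal {R κ ι : Type*} [CommRing R] [Fintype κ] [Fintype ι]
    [DecidableEq κ] [DecidableEq ι] (C : Matrix κ κ R) (B : κ → Matrix ι ι R) :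
    (of fun p q : κ × ι => C p.1 q.1 * B q.1 p.2 q.2).det =
      C.det ^ Fintype.card ι * ∏ k, (B k).det := by
  have : (of fun p q : κ × ι => C p.1 q.1 * B q.1 p.2 q.2) =
      (C ⊗ₖ (1 : Matrix ι ι R)) *
        (blockDiagonal B).submatrix (Equiv.prodComm κ ι) (Equiv.prodComm κ ι) := by
    ext ⟨k, i⟩ ⟨k', i'⟩
    simp [mul_apply, Fintype.sum_prod_type, one_apply, blockDiagonal_apply]
  rw [this, det_mul, det_kronecker, det_one, one_pow, mul_one, det_submatrix_equiv_self,
    det_blockDiagonal]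

theorem Algebra.discr_smulTower {k K L : Type*} [Field k] [Field K] [Field L] [Algebra k K]
    [Algebra K L] [Algebra k L] [IsScalarTower k K L] [FiniteDimensional k K]
    [FiniteDimensional K L] [Algebra.IsSeparable k K] [Algebra.IsSeparable K L]
    {κ ι : Type*} [Fintype κ] [Fintype ι] [DecidableEq κ] [DecidableEq ι]
    (c : Basis κ k K) (b : Basis ι K L) :
    Algebra.discr k (c.smulTower b) =
      Algebra.discr k c ^ Fintype.card ι * Algebra.norm k (Algebra.discr K b) := by
  let E := AlgebraicClosure k
  have : FiniteDimensional k L := Module.Finite.trans K L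
  have : Algebra.IsSeparable k L := Algebra.IsSeparable.trans k K L
  -- the embeddings of `L` above `σ`, as `K`-algebra maps for the `K`-structure on `E` given by `σ`
  let e₁ (σ : K →ₐ[k] E) : ι ≃ @AlgHom K L E _ _ _ _ σ.toRingHom.toAlgebra :=
    letI := σ.toRingHom.toAlgebra
    Fintype.equivOfCardEq (by rw [AlgHom.card K L E, finrank_eq_card_basis b])
  let e₀ : κ ≃ (K →ₐ[k] E) :=
    Fintype.equivOfCardEq (by rw [AlgHom.card k K E, finrank_eq_card_basis c])
  let e : κ × ι ≃ (L →ₐ[k] E) := (e₀.prodCongr (Equiv.refl ι)).trans <|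
    (Equiv.sigmaEquivProd _ _).symm.trans <| (Equiv.sigmaCongrRight e₁).trans algHomEquivSigma.symm
  let B (σ : K →ₐ[k] E) : Matrix ι ι E := of fun i i' => e₁ σ i' (b i)
  have hB (σ : K →ₐ[k] E) : σ (Algebra.discr K b) = (B σ).det ^ 2 := by
    let _ : Algebra K E := σ.toRingHom.toAlgebra
    exact discr_eq_det_embeddingsMatrixReindex_pow_two K E b (e₁ σ)
  have hM : embeddingsMatrixReindex k E (c.smulTower b) e =
      of fun p q => embeddingsMatrixReindex k E c e₀ p.1 q.1 * B (e₀ q.1) p.2 q.2 := by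
    ext ⟨i, j⟩ ⟨i', j'⟩
    let _ : Algebra K E := (e₀ i').toRingHom.toAlgebra
    simp only [embeddingsMatrixReindex, reindex_apply, submatrix_apply, embeddingsMatrix_apply,
      of_apply, Equiv.symm_symm, Equiv.refl_symm, Equiv.refl_apply, Basis.smulTower_apply,
      Algebra.smul_def, map_mul]
    exact congrArg (· * _) ((e₁ (e₀ i') j').commutes (c i))
  apply (algebraMap k E).injective
  rw [discr_eq_det_embeddingsMatrixReindex_pow_two k E _ e, hM,
    det_of_mul_blockDiagonal (embeddingsMatrixReindex k E c e₀) (fun i => B (e₀ i)), map_mul,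
    map_pow, discr_eq_det_embeddingsMatrixReindex_pow_two k E c e₀,
    Algebra.norm_eq_prod_embeddings k E, ← Fintype.prod_equiv e₀ _ _ fun _ => rfl, mul_pow,
    ← pow_mul, ← pow_mul, mul_comm 2, ← Finset.prod_pow]
  simp only [hB]

theorem Algebra.exists_basis_discr_eq_four_mul {K L : Type*} [Field K] [Field L] [Algebra K L]
    [Algebra.IsSeparable K L] {D : K} {d : L} (hd : d ^ 2 = algebraMap K L D)
    (hgen : Algebra.adjoin K {d} = ⊤) (hdeg : finrank K L = 2) :
    ∃ b : Basis (Fin 2) K L, Algebra.discr K b = 4 * D := by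
  have : FiniteDimensional K L := Module.finite_of_finrank_eq_succ hdeg
  let pb : PowerBasis K L := (Algebra.adjoin.powerBasis (Algebra.IsIntegral.isIntegral d)).map <|
    (Subalgebra.equivOfEq _ _ hgen).trans Subalgebra.topEquiv
  have hpb : pb.gen = d := rfl
  have hdim : pb.dim = 2 := pb.finrank.symm.trans hdeg
  have hminpoly : minpoly K d = X ^ 2 - C D := by
    refine (eq_of_monic_of_dvd_of_natDegree_le (minpoly.monic pb.isIntegral_gen)
      (monic_X_pow_sub_C D two_ne_zero) (minpoly.dvd K d ?_) ?_).symm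
    · simp [hd]
    · rw [pb.natDegree_minpoly, hdim, natDegree_X_pow_sub_C]
  have hnorm : Algebra.norm K d = -D := by
    simpa [hpb, hdim, hminpoly] using Algebra.PowerBasis.norm_gen_eq_coeff_zero_minpoly pb
  refine ⟨pb.basis.reindex (finCongr hdim), ?_⟩
  rw [Basis.coe_reindex, Algebra.discr_reindex, Algebra.discr_powerBasis_eq_norm, hpb, hminpoly]
  norm_num [hnorm, hdeg]

theorem NumberField.exists_discr_eq_sq_mul_discr {K : Type*} [Field K] [NumberField K]
    {ι : Type*} [Fintype ι] [DecidableEq ι] (b : Basis ι ℚ K) :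
    ∃ t : ℚ, (discr K : ℚ) = t ^ 2 * Algebra.discr ℚ b := by
  let b' := (integralBasis K).reindex ((integralBasis K).indexEquiv b)
  refine ⟨(b.toMatrix b').det, ?_⟩
  rw [coe_discr, ← Algebra.discr_reindex ℚ (integralBasis K) ((integralBasis K).indexEquiv b),
    ← Basis.coe_reindex, ← Algebra.discr_of_matrix_vecMul, Basis.toMatrix_map_vecMul]

theorem NumberField.exists_discr_eq_sq_mul_norm_pow_mul_norm_discr {F₀ F₁ F : Type*} [Field F₀]
    [NumberField F₀] [Field F₁] [NumberField F₁] [Field F] [NumberField F] [Algebra F₀ F₁]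
    [Algebra F₁ F] {D : F₀} {d₁ : F₁} (hd₁ : d₁ ^ 2 = algebraMap F₀ F₁ D)
    (hgen : Algebra.adjoin F₀ {d₁} = ⊤) (hdeg : finrank F₀ F₁ = 2)
    {ι : Type*} [Fintype ι] [DecidableEq ι] (b : Basis ι F₁ F) :
    ∃ u : ℚ, (discr F : ℚ) =
      u ^ 2 * (Algebra.norm ℚ D ^ Fintype.card ι * Algebra.norm ℚ (Algebra.discr F₁ b)) := by
  obtain ⟨b₁, hb₁⟩ := Algebra.exists_basis_discr_eq_four_mul hd₁ hgen hdeg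
  let b₀ := finBasis ℚ F₀
  obtain ⟨t, ht⟩ := exists_discr_eq_sq_mul_discr ((b₀.smulTower b₁).smulTower b)
  have hnorm : Algebra.norm ℚ (4 * D) = (2 ^ finrank ℚ F₀) ^ 2 * Algebra.norm ℚ D := by
    rw [map_mul, ← map_ofNat (algebraMap ℚ F₀) 4, Algebra.norm_algebraMap, ← pow_mul, mul_comm _ 2,
      pow_mul]
    norm_num
  refine ⟨t * (Algebra.discr ℚ b₀ * 2 ^ finrank ℚ F₀) ^ Fintype.card ι, ?_⟩
  rw [ht, Algebra.discr_smulTower, Algebra.discr_smulTower, hb₁, hnorm, Fintype.card_fin]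
  ring

theorem Rat.exists_sqrt_abs_eq_of_eq_sq_mul_pow_mul {d u N ν : ℚ} {n m : ℕ}
    (hd : d = u ^ 2 * (N ^ m * ν)) (hd0 : d ≠ 0) (hν : 0 ≤ ν) (hN : 0 ≤ (-1) ^ n * N) :
    ∃ q : ℚ, q ≠ 0 ∧ ((√|(d : ℝ)| : ℝ) : ℂ) =
      q * Complex.I ^ (n * m) * ((N : ℂ) ^ ((1 : ℂ) / 2)) ^ m * ((√ν : ℝ) : ℂ) := by
  obtain ⟨ε, hε0, hε⟩ := exists_sqrt_abs_eq_mul_I_pow_mul_cpow_half hN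
  have hu0 : u ≠ 0 := by
    rintro rfl
    exact hd0 (by rw [hd]; ring)
  have hsqrt : √|(d : ℝ)| = ((|u| : ℚ) : ℝ) * √|(N : ℝ)| ^ m * √(ν : ℝ) := by
    have hdR : (d : ℝ) = (u : ℝ) ^ 2 * ((N : ℝ) ^ m * ν) := by exact_mod_cast hd
    have hνR : (0 : ℝ) ≤ ν := by exact_mod_cast hν
    rw [Real.sqrt_eq_iff_eq_sq (abs_nonneg _) (by positivity), hdR, abs_mul, abs_mul, abs_pow,
      abs_pow, abs_of_nonneg hνR, mul_pow, mul_pow, ← pow_mul, mul_comm m, pow_mul,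
      Real.sq_sqrt (abs_nonneg _), Real.sq_sqrt hνR, Rat.cast_abs, mul_assoc]
  refine ⟨|u| * ε ^ m, mul_ne_zero (abs_ne_zero.2 hu0) (pow_ne_zero m hε0), ?_⟩
  rw [hsqrt, pow_mul, Complex.ofReal_mul, Complex.ofReal_mul, Complex.ofReal_pow,
    Complex.ofReal_ratCast, hε, Rat.cast_mul, Rat.cast_pow]
  ring

theorem discr_sqrt_eq_of_totallyImaginary_general
    (F₀ F₁ F : Type*) [Field F₀] [NumberField F₀] [Field F₁] [NumberField F₁]
    [Field F] [NumberField F]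
    [Algebra F₀ F₁] [Algebra F₁ F]
    (hF₁ti : ∀ σ : F₁ →+* ℂ, (starRingEnd ℂ).comp σ ≠ σ)
    (D : F₀) (hD : ∀ σ : F₀ →+* ℝ, σ D < 0)
    (d₁ : F₁) (hd₁ : d₁ ^ 2 = algebraMap F₀ F₁ D)
    (hgen : Algebra.adjoin F₀ ({d₁} : Set F₁) = ⊤)
    (hdeg : Module.finrank F₀ F₁ = 2)
    (ι : Type*) [Fintype ι] [DecidableEq ι] (b : Module.Basis ι F₁ F) :
    0 < Algebra.norm ℚ (Algebra.discr F₁ b) ∧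
    ∃ q : ℚ, q ≠ 0 ∧
      ((Real.sqrt |(NumberField.discr F : ℝ)| : ℝ) : ℂ) =
        (q : ℂ) * Complex.I ^ (Module.finrank ℚ F / 2) *
          (((Algebra.norm ℚ D : ℚ) : ℂ) ^ ((1 : ℂ) / 2)) ^ (Module.finrank F₁ F) *
          (Real.sqrt ((Algebra.norm ℚ (Algebra.discr F₁ b) : ℝ)) : ℂ) := by
  have hν := norm_pos_of_forall_conj_comp_ne hF₁ti (Algebra.discr_not_zero_of_basis F₁ b)
  refine ⟨hν, ?_⟩
  obtain ⟨u, hu⟩ := exists_discr_eq_sq_mul_norm_pow_mul_norm_discr hd₁ hgen hdeg b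
  rw [← finrank_eq_card_basis b] at hu
  have hrank : finrank ℚ F / 2 = finrank ℚ F₀ * finrank F₁ F := by
    rw [← finrank_mul_finrank ℚ F₁ F, ← finrank_mul_finrank ℚ F₀ F₁, hdeg, mul_right_comm,
      mul_comm, Nat.mul_div_cancel_left _ two_pos]
  rw [hrank, ← Rat.cast_intCast]
  exact Rat.exists_sqrt_abs_eq_of_eq_sq_mul_pow_mul hu (by exact_mod_cast discr_ne_zero F) hν.le
    (neg_one_pow_finrank_mul_norm_nonneg fun σ => (hD σ).le)

/-- Let `F` be a totally imaginary field containing a maximal CM subfield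
`F₁ = F₀(√D)`, `F₀` totally real and `D ∈ F₀` totally negative.  Then
`N_{F₁/ℚ}(δ_{F/F₁}) > 0` and, as elements of `ℂ^×/ℚ^×`,
`|δ_{F/ℚ}|^{1/2} = i^{d_F/2} · Δ_F · (N_{F₁/ℚ}(δ_{F/F₁}))^{1/2}`, where
`Δ_F = (√(N_{F₀/ℚ}(D)))^{[F:F₁]}` and `δ_{F/F₁}` is computed (mod squares) as
the discriminant of any `F₁`-basis of `F`. -/
theorem discr_sqrt_eq_of_totallyImaginary
    (F₀ F₁ F : Type*) [Field F₀] [NumberField F₀] [Field F₁] [NumberField F₁]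
    [Field F] [NumberField F]
    [Algebra F₀ F₁] [Algebra F₁ F] [Algebra F₀ F] [IsScalarTower F₀ F₁ F]
    (hF₀real : ∀ σ : F₀ →+* ℂ, (starRingEnd ℂ).comp σ = σ)
    (hF₁ti : ∀ σ : F₁ →+* ℂ, (starRingEnd ℂ).comp σ ≠ σ)
    (hFti : ∀ τ : F →+* ℂ, (starRingEnd ℂ).comp τ ≠ τ)
    (D : F₀) (hD : ∀ σ : F₀ →+* ℝ, σ D < 0)
    (d₁ : F₁) (hd₁ : d₁ ^ 2 = algebraMap F₀ F₁ D)
    (hgen : Algebra.adjoin F₀ ({d₁} : Set F₁) = ⊤)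
    (hdeg : Module.finrank F₀ F₁ = 2)
    -- `F₁` is a *maximal* CM subfield of `F`:
    (hmax : ∀ K : Subfield F, IsCMSubfield F K →
      K ≤ (algebraMap F₁ F).fieldRange)
    (ι : Type*) [Fintype ι] [DecidableEq ι] (b : Module.Basis ι F₁ F) :
    0 < Algebra.norm ℚ (Algebra.discr F₁ b) ∧
    ∃ q : ℚ, q ≠ 0 ∧
      ((Real.sqrt |(NumberField.discr F : ℝ)| : ℝ) : ℂ) =
        (q : ℂ) * Complex.I ^ (Module.finrank ℚ F / 2) *
          (((Algebra.norm ℚ D : ℚ) : ℂ) ^ ((1 : ℂ) / 2)) ^ (Module.finrank F₁ F) *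
          (Real.sqrt ((Algebra.norm ℚ (Algebra.discr F₁ b) : ℝ)) : ℂ) :=
  discr_sqrt_eq_of_totallyImaginary_general F₀ F₁ F hF₁ti D hD d₁ hd₁ hgen hdeg ι b
end
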